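/- arXiv:2002.04567 — 7 statements merged into one kernel-verified Lean document; each statement's English description precedes it below -/
import Mathlib

section
/- Let $k$ be a commutative ring with unity, and let $s, t$ be units of $k$ satisfying $(1-s)(1-t) = 0$. Then the map $R: k \times k \to k \times k$ defined by $R(a,b) = ((1-s)a + sb,\ ta + (1-t)b)$ satisfies the set-theoretic Yang-Baxter equation. -/
theorem alexander_yang_baxter_general (k : Type*) [CommRing k] (s t : k)
    (hst : (1 - s) * (1 - t) = 0)
    (R : k × k → k × k)
    (hR : ∀ a b : k, R (a, b) = ((1 - s) * a + s * b, t * a + (1 - t) * b))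
    (Rl Rr : k × k × k → k × k × k)
    (hRl : ∀ a b c : k, Rl (a, b, c) = ((R (a, b)).1, (R (a, b)).2, c))
    (hRr : ∀ a b c : k, Rr (a, b, c) = (a, R (b, c))) :
    Rl ∘ Rr ∘ Rl = Rr ∘ Rl ∘ Rr := by
  funext ⟨a, b, c⟩
  simp only [Function.comp_apply, hRl, hRr, hR, Prod.mk.injEq]
  -- In each coordinate the two sides differ by a multiple of `(1 - s) * (1 - t)`.
  refine ⟨?_, ?_, ?_⟩
  · linear_combination (s * b - s * a) * hst
  · linear_combination (t * a + (s - t) * b - s * c) * hst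
  · linear_combination (t * c - t * b) * hst

/-- The Alexander biquandle map `R(a,b) = ((1-s)a + sb, ta + (1-t)b)` over a commutative
ring `k` with units `s, t` satisfying `(1-s)(1-t) = 0` satisfies the set-theoretic
Yang-Baxter equation. -/
theorem alexander_yang_baxter (k : Type*) [CommRing k] (s t : k)
    (hs : IsUnit s) (ht : IsUnit t) (hst : (1 - s) * (1 - t) = 0)
    (R : k × k → k × k)
    (hR : ∀ a b : k, R (a, b) = ((1 - s) * a + s * b, t * a + (1 - t) * b))
    (Rl Rr : k × k × k → k × k × k)
    (hRl : ∀ a b c : k, Rl (a, b, c) = ((R (a, b)).1, (R (a, b)).2, c))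
    (hRr : ∀ a b c : k, Rr (a, b, c) = (a, R (b, c))) :
    Rl ∘ Rr ∘ Rl = Rr ∘ Rl ∘ Rr :=
  alexander_yang_baxter_general k s t hst R hR Rl Rr hRl hRr
end

section
/- Let $X$ be a set with a set-theoretic Yang-Baxter operator $R$, and suppose $R(x, y) = (x, y)$ for some $x, y \in X$. If $(R \times \mathrm{Id})(\mathrm{Id} \times R)(x, y, z) = (w, u, v)$ for some $z \in X$, then $R(u, v) = (u, v)$. -/
theorem Function.IsFixedPt.braid {α : Type*} {f g : α → α} (hbraid : f ∘ g ∘ f = g ∘ f ∘ g)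
    {p : α} (hp : IsFixedPt f p) : IsFixedPt g (f (g p)) := by
  have hbraid_p : f (g (f p)) = g (f (g p)) := congrFun hbraid p
  rw [hp] at hbraid_p
  exact hbraid_p.symm

theorem fixed_pair_left_propagation_general {X : Type*} (R : X × X → X × X)
    (Rl Rr : X × X × X → X × X × X)
    (hRl : ∀ x y z : X, Rl (x, y, z) = ((R (x, y)).1, (R (x, y)).2, z))
    (hRr : ∀ x y z : X, Rr (x, y, z) = (x, R (y, z)))
    (hYB : Rl ∘ Rr ∘ Rl = Rr ∘ Rl ∘ Rr)
    (x y z w u v : X)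
    (hfix : R (x, y) = (x, y))
    (h : Rl (Rr (x, y, z)) = (w, u, v)) :
    R (u, v) = (u, v) := by
  have hRl_fix : Function.IsFixedPt Rl (x, y, z) := by
    rw [Function.IsFixedPt, hRl, hfix]
  have hRr_fix : Rr (w, u, v) = (w, u, v) := h ▸ hRl_fix.braid hYB
  rw [hRr] at hRr_fix
  exact (Prod.mk.inj hRr_fix).2

/-- Fixed pairs of a set-theoretic Yang-Baxter operator propagate under the left
face maps: if `R(x,y) = (x,y)` and `(R × Id)(Id × R)(x,y,z) = (w,u,v)`,
then `R(u,v) = (u,v)`. -/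
theorem fixed_pair_left_propagation {X : Type*} (R : X × X → X × X)
    (hbij : Function.Bijective R)
    (Rl Rr : X × X × X → X × X × X)
    (hRl : ∀ x y z : X, Rl (x, y, z) = ((R (x, y)).1, (R (x, y)).2, z))
    (hRr : ∀ x y z : X, Rr (x, y, z) = (x, R (y, z)))
    (hYB : Rl ∘ Rr ∘ Rl = Rr ∘ Rl ∘ Rr)
    (x y z w u v : X)
    (hfix : R (x, y) = (x, y))
    (h : Rl (Rr (x, y, z)) = (w, u, v)) :
    R (u, v) = (u, v) :=
  fixed_pair_left_propagation_general R Rl Rr hRl hRr hYB x y z w u v hfix h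
end

section
/- Let $X$ be a birack with set-theoretic Yang-Baxter operator $R$, and suppose there is a unique $y_0$ such that $R(x, y_0) = (x, y_0)$ for each $x$ (biquandle condition). Then for each $y \in X$ there exists a unique $x \in X$ such that $R(x, y) = (x, y)$. -/
/-!
If `R (y, t) = (y, t)` and `R (a, y) = (c, y)`, evaluating both sides of the Yang–Baxter equation
at `(a, y, t)` gives `(R (c, y), t) = (c, y, t)`. Right invertibility provides such an `a`
(the unique one with `(R (a, y)).2 = y`) and also forces every `x` with `R (x, y) = (x, y)` to
equal it.
-/

theorem fixed_of_yangBaxter {X : Type*} {R : X × X → X × X} {Rl Rr : X × X × X → X × X × X}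
    (hRl : ∀ x y z : X, Rl (x, y, z) = ((R (x, y)).1, (R (x, y)).2, z))
    (hRr : ∀ x y z : X, Rr (x, y, z) = (x, R (y, z)))
    (hYB : Rl ∘ Rr ∘ Rl = Rr ∘ Rl ∘ Rr) {a c y t : X}
    (hyt : R (y, t) = (y, t)) (hay : R (a, y) = (c, y)) :
    R (c, y) = (c, y) := by
  have key := congrFun hYB (a, y, t)
  simp only [Function.comp_apply, hRl, hRr, hay, hyt, Prod.mk.injEq] at key
  exact Prod.ext key.1 key.2.1

theorem biquandle_fixed_pair_other_side_general {X : Type*} (R : X × X → X × X)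
    (Rl Rr : X × X × X → X × X × X)
    (hRl : ∀ x y z : X, Rl (x, y, z) = ((R (x, y)).1, (R (x, y)).2, z))
    (hRr : ∀ x y z : X, Rr (x, y, z) = (x, R (y, z)))
    (hYB : Rl ∘ Rr ∘ Rl = Rr ∘ Rl ∘ Rr)
    (hright : ∀ b d : X, ∃! a : X, (R (a, b)).2 = d)
    (hfix : ∀ x : X, ∃! y : X, R (x, y) = (x, y)) :
    ∀ y : X, ∃! x : X, R (x, y) = (x, y) := by
  intro y
  obtain ⟨t, hyt, -⟩ := hfix y
  obtain ⟨a, hay, ha_unique⟩ := hright y y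
  have hfixed := fixed_of_yangBaxter hRl hRr hYB hyt (Prod.ext rfl hay)
  refine ⟨_, hfixed, fun x hx => ?_⟩
  exact (ha_unique x (congrArg Prod.snd hx)).trans (ha_unique _ (congrArg Prod.snd hfixed)).symm

/-- In a birack satisfying the biquandle condition (for each `x` there is a unique `y`
with `R(x,y) = (x,y)`), for each `y` there is also a unique `x` with `R(x,y) = (x,y)`. -/
theorem biquandle_fixed_pair_other_side {X : Type*} (R : X × X → X × X)
    (hbij : Function.Bijective R)
    (Rl Rr : X × X × X → X × X × X)
    (hRl : ∀ x y z : X, Rl (x, y, z) = ((R (x, y)).1, (R (x, y)).2, z))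
    (hRr : ∀ x y z : X, Rr (x, y, z) = (x, R (y, z)))
    (hYB : Rl ∘ Rr ∘ Rl = Rr ∘ Rl ∘ Rr)
    (hleft : ∀ a c : X, ∃! b : X, (R (a, b)).1 = c)
    (hright : ∀ b d : X, ∃! a : X, (R (a, b)).2 = d)
    (hfix : ∀ x : X, ∃! y : X, R (x, y) = (x, y)) :
    ∀ y : X, ∃! x : X, R (x, y) = (x, y) :=
  biquandle_fixed_pair_other_side_general R Rl Rr hRl hRr hYB hright hfix
end

section
/- Let $X$ be a set with a set-theoretic Yang-Baxter operator $R = (R_1, R_2)$. Define face maps $d_i^r, d_i^l : X^n \to X^{n-1}$ by $d_i^r = (\mathrm{Id}^{n-2} \times R_1) \circ (\mathrm{Id}^{n-3} \times R \times \mathrm{Id}) \circ \cdots \circ (\mathrm{Id}^{i-1} \times R \times \mathrm{Id}^{n-i-1})$ and $d_i^l = (R_2 \times \mathrm{Id}^{n-2}) \circ (\mathrm{Id} \times R \times \mathrm{Id}^{n-3}) \circ \cdots \circ (\mathrm{Id}^{i-2} \times R \times \mathrm{Id}^{n-i})$. Then for all $\varepsilon, \delta \in \{l, r\}$ and $1 \leq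 i < j \leq n$, the pre-cubical relation $d_i^\varepsilon \circ d_j^\delta = d_{j-1}^\delta \circ d_i^\varepsilon$ holds as maps $X^n \to X^{n-2}$. -/
/-!
Face maps of the pre-cubical structure associated to a set-theoretic Yang-Baxter
operator `R = (R₁, R₂)` on a set `X`.  An `n`-tuple is modelled as a list of length `n`.

`ybFaceL R i` is the left face map `dᵢˡ`: the `i`-th entry moves to the left through the
entries before it (each passed entry `y` meeting the mover `m` is replaced by `R₂(y, m)`
while the mover becomes `R₁(y, m)`), after which the mover is deleted; the final deletion
is the `R₂ × Id^{n-2}` collapse of the composition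
`(R₂ × Id^{n-2}) ∘ (Id × R × Id^{n-3}) ∘ ⋯ ∘ (Id^{i-2} × R × Id^{n-i})`.
Similarly `ybFaceR R i` is the right face map `dᵢʳ`, corresponding to
`(Id^{n-2} × R₁) ∘ (Id^{n-3} × R × Id) ∘ ⋯ ∘ (Id^{i-1} × R × Id^{n-i-1})`.
-/

/-- The mover `m` passes leftwards through a list: each passed entry `y` becomes
`R₂ (y, m)` and the mover continues as `R₁ (y, m)`.  Returns the transformed list
together with the final mover. -/
def ybPassL {X : Type*} (R : X → X → X × X) : List X → X → List X × X
  | [], m => ([], m)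
  | y :: t, m =>
      let p := ybPassL R t m
      ((R y p.2).2 :: p.1, (R y p.2).1)

/-- The mover `m` passes rightwards through a list: each passed entry `y` becomes
`R₁ (m, y)` and the mover continues as `R₂ (m, y)`; the mover is discarded at the end. -/
def ybPassR {X : Type*} (R : X → X → X × X) : X → List X → List X
  | _, [] => []
  | m, y :: t => (R m y).1 :: ybPassR R (R m y).2 t

/-- The left Yang-Baxter face map `dᵢˡ : Xⁿ → Xⁿ⁻¹` (1-indexed `i`). -/
def ybFaceL {X : Type*} (R : X → X → X × X) (i : ℕ) (l : List X) : List X :=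
  match l.drop (i - 1) with
  | [] => l.take (i - 1)
  | m :: suf => (ybPassL R (l.take (i - 1)) m).1 ++ suf

/-- The right Yang-Baxter face map `dᵢʳ : Xⁿ → Xⁿ⁻¹` (1-indexed `i`). -/
def ybFaceR {X : Type*} (R : X → X → X × X) (i : ℕ) (l : List X) : List X :=
  match l.drop (i - 1) with
  | [] => l.take (i - 1)
  | m :: suf => l.take (i - 1) ++ ybPassR R m suf

/-- The two families of face maps, indexed by `ε ∈ {l, r}` (here `true = l`, `false = r`). -/
def ybFace {X : Type*} (R : X → X → X × X) : Bool → ℕ → List X → List X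
  | true => ybFaceL R
  | false => ybFaceR R

/-!
Write the tuple as `A ++ a :: (B ++ b :: C)` with `a`, `b` at positions `i < j`. The faces
`dᵢˡ` and `dⱼʳ` act on the disjoint pieces `A ++ [a]` and `b :: C`, so they commute outright.
In the other cases the two movers meet: they travel together through `C` (two right faces)
or through `A` (two left faces), or towards each other through `B`. The Yang-Baxter
equation, applied once for every entry passed, moves the crossing of the two movers from
one end of that stretch to the other.
-/

section

variable {X : Type*} (R : X → X → X × X)

/-- The three coordinates of `R₁₂ R₂₃ R₁₂ = R₂₃ R₁₂ R₂₃` at `(x, y, z)`. -/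
structure IsYangBaxter : Prop where
  out_left : ∀ x y z : X, (R (R x y).1 (R (R x y).2 z).1).1 = (R x (R y z).1).1
  out_mid : ∀ x y z : X,
    (R (R x y).1 (R (R x y).2 z).1).2 = (R (R x (R y z).1).2 (R y z).2).1
  out_right : ∀ x y z : X, (R (R x y).2 z).2 = (R (R x (R y z).1).2 (R y z).2).2

theorem isYangBaxter_of_comp_eq (Rl Rr : X × X × X → X × X × X)
    (hRl : ∀ x y z : X, Rl (x, y, z) = ((R x y).1, (R x y).2, z))
    (hRr : ∀ x y z : X, Rr (x, y, z) = (x, (R y z).1, (R y z).2))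
    (hYB : Rl ∘ Rr ∘ Rl = Rr ∘ Rl ∘ Rr) : IsYangBaxter R := by
  have h (x y z : X) := congrFun hYB (x, y, z)
  simp only [Function.comp_apply, hRl, hRr, Prod.mk.injEq] at h
  exact ⟨fun x y z => (h x y z).1, fun x y z => (h x y z).2.1, fun x y z => (h x y z).2.2⟩

/-- The mover at the end of `ybPassR R m l`, which `ybPassR` discards. -/
def ybMoverR : X → List X → X
  | m, [] => m
  | m, y :: t => ybMoverR (R m y).2 t

theorem length_ybPassR : ∀ (m : X) (l : List X), (ybPassR R m l).length = l.length
  | _, [] => rfl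
  | m, _ :: t => by simp [ybPassR, length_ybPassR _ t]

theorem length_ybPassL : ∀ (l : List X) (m : X), (ybPassL R l m).1.length = l.length
  | [], _ => rfl
  | _ :: t, m => by simp [ybPassL, length_ybPassL t]

theorem ybPassR_append : ∀ (m : X) (u v : List X),
    ybPassR R m (u ++ v) = ybPassR R m u ++ ybPassR R (ybMoverR R m u) v
  | _, [], _ => rfl
  | m, y :: t, v => by simp [ybPassR, ybMoverR, ybPassR_append _ t]

theorem ybPassL_append : ∀ (u v : List X) (m : X),
    ybPassL R (u ++ v) m =
      ((ybPassL R u (ybPassL R v m).2).1 ++ (ybPassL R v m).1,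
        (ybPassL R u (ybPassL R v m).2).2)
  | [], _, _ => by simp [ybPassL]
  | _ :: t, v, m => by simp [ybPassL, ybPassL_append t]

theorem ybFaceR_append_cons {k : ℕ} (P : List X) (m : X) (S : List X)
    (hk : P.length + 1 = k) : ybFaceR R k (P ++ m :: S) = P ++ ybPassR R m S := by
  subst hk
  simp [ybFaceR]

theorem ybFaceL_append_cons {k : ℕ} (P : List X) (m : X) (S : List X)
    (hk : P.length + 1 = k) : ybFaceL R k (P ++ m :: S) = (ybPassL R P m).1 ++ S := by
  subst hk
  simp [ybFaceL]

theorem ybFaceR_append_append_cons {k : ℕ} (P Q : List X) (m : X) (S : List X)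
    (hk : P.length + Q.length + 1 = k) :
    ybFaceR R k (P ++ (Q ++ m :: S)) = P ++ (Q ++ ybPassR R m S) := by
  rw [← List.append_assoc, ybFaceR_append_cons R _ m S (by simpa), List.append_assoc]

theorem ybFaceL_append_append_cons {k : ℕ} (P Q : List X) (m : X) (S : List X)
    (hk : P.length + Q.length + 1 = k) :
    ybFaceL R k (P ++ (Q ++ m :: S)) =
      (ybPassL R P (ybPassL R Q m).2).1 ++ ((ybPassL R Q m).1 ++ S) := by
  rw [← List.append_assoc, ybFaceL_append_cons R _ m S (by simpa), ybPassL_append,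
    List.append_assoc]

theorem exists_eq_append_cons {l : List X} {k : ℕ} (hk : k < l.length) :
    ∃ A a C, l = A ++ a :: C ∧ A.length = k :=
  ⟨l.take k, l[k], l.drop (k + 1), by simp, by simp; omega⟩

theorem exists_eq_append_cons_append_cons {l : List X} {i j : ℕ} (hij : i < j)
    (hj : j < l.length) :
    ∃ A a B b C, l = A ++ a :: (B ++ b :: C) ∧ A.length = i ∧ A.length + B.length + 1 = j := by
  obtain ⟨A, a, D, rfl, rfl⟩ := exists_eq_append_cons (hij.trans hj)
  obtain ⟨B, b, C, rfl, hB⟩ := exists_eq_append_cons (l := D) (k := j - A.length - 1)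
    (by simp at hj; omega)
  exact ⟨A, a, B, b, C, rfl, rfl, by omega⟩

theorem ybPassR_ybPassR (hR : IsYangBaxter R) : ∀ (x y : X) (C : List X),
    ybPassR R x (ybPassR R y C) = ybPassR R (R x y).1 (ybPassR R (R x y).2 C)
  | _, _, [] => rfl
  | x, y, c :: t => by
    simp only [ybPassR]
    rw [ybPassR_ybPassR hR _ _ t, hR.out_left x y c, hR.out_mid x y c, hR.out_right x y c]

/-- Crossing `a` and `b` before they pass leftwards through `A` agrees with crossing them
afterwards; the second conjunct compares the two outgoing movers. -/
theorem ybPassL_ybPassL (hR : IsYangBaxter R) : ∀ (A : List X) (a b : X),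
    (ybPassL R (ybPassL R A (R a b).1).1 (R a b).2).1 = (ybPassL R (ybPassL R A a).1 b).1 ∧
      ((ybPassL R A (R a b).1).2, (ybPassL R (ybPassL R A (R a b).1).1 (R a b).2).2) =
        R (ybPassL R A a).2 (ybPassL R (ybPassL R A a).1 b).2
  | [], _, _ => ⟨rfl, rfl⟩
  | y :: t, a, b => by
    obtain ⟨hlist, hmovers⟩ := ybPassL_ybPassL hR t a b
    simp only [Prod.ext_iff] at hmovers ⊢
    simp only [ybPassL]
    set u := (ybPassL R t a).2
    set v := (ybPassL R (ybPassL R t a).1 b).2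
    rw [hlist, hmovers.1, hmovers.2, hR.out_left y u v, hR.out_mid y u v, hR.out_right y u v]
    exact ⟨rfl, rfl, rfl⟩

/-- `a` moving right through `B` and `b` moving left through it may cross at the right end
of `B` (left-hand sides) or at its left end (right-hand sides). -/
theorem ybPassL_ybPassR (hR : IsYangBaxter R) : ∀ (B : List X) (a b : X),
    (ybPassL R (ybPassR R a B) (R (ybMoverR R a B) b).1).1 =
        ybPassR R (R a (ybPassL R B b).2).2 (ybPassL R B b).1 ∧
      (ybPassL R (ybPassR R a B) (R (ybMoverR R a B) b).1).2 = (R a (ybPassL R B b).2).1 ∧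
      (R (ybMoverR R a B) b).2 = ybMoverR R (R a (ybPassL R B b).2).2 (ybPassL R B b).1
  | [], _, _ => ⟨rfl, rfl, rfl⟩
  | y :: t, a, b => by
    obtain ⟨hlist, hleft, hright⟩ := ybPassL_ybPassR hR t (R a y).2 b
    simp only [ybPassL, ybPassR, ybMoverR]
    rw [hlist, hleft, hright, hR.out_left a y _, hR.out_mid a y _, hR.out_right a y _]
    exact ⟨rfl, rfl, rfl⟩

section Faces

variable (A B C : List X) (a b : X)

theorem ybFaceR_append_cons_append_cons :
    ybFaceR R (A.length + B.length + 2) (A ++ a :: (B ++ b :: C)) =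
      A ++ a :: (B ++ ybPassR R b C) := by
  rw [← List.cons_append, ybFaceR_append_append_cons R A (a :: B) b C (by simp; omega),
    List.cons_append]

theorem ybFaceL_append_cons_append_cons :
    ybFaceL R (A.length + B.length + 2) (A ++ a :: (B ++ b :: C)) =
      (ybPassL R A (R a (ybPassL R B b).2).1).1 ++
        (R a (ybPassL R B b).2).2 :: ((ybPassL R B b).1 ++ C) := by
  rw [← List.cons_append, ybFaceL_append_append_cons R A (a :: B) b C (by simp; omega)]
  simp [ybPassL]

theorem ybFaceR_ybFaceR (hR : IsYangBaxter R) :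
    ybFaceR R (A.length + 1) (ybFaceR R (A.length + B.length + 2) (A ++ a :: (B ++ b :: C))) =
      ybFaceR R (A.length + B.length + 1) (ybFaceR R (A.length + 1) (A ++ a :: (B ++ b :: C))) := by
  rw [ybFaceR_append_cons_append_cons, ybFaceR_append_cons R A a _ rfl,
    ybFaceR_append_cons R A a _ rfl, ybPassR_append, ybPassR_append, ybPassR.eq_2,
    ybFaceR_append_append_cons R A _ _ _ (by simp [length_ybPassR]),
    ybPassR_ybPassR R hR]

theorem ybFaceL_ybFaceR :
    ybFaceL R (A.length + 1) (ybFaceR R (A.length + B.length + 2) (A ++ a :: (B ++ b :: C))) =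
      ybFaceR R (A.length + B.length + 1) (ybFaceL R (A.length + 1) (A ++ a :: (B ++ b :: C))) := by
  rw [ybFaceR_append_cons_append_cons, ybFaceL_append_cons R A a _ rfl,
    ybFaceL_append_cons R A a _ rfl,
    ybFaceR_append_append_cons R _ _ _ _ (by simp [length_ybPassL])]

theorem ybFaceL_ybFaceL (hR : IsYangBaxter R) :
    ybFaceL R (A.length + 1) (ybFaceL R (A.length + B.length + 2) (A ++ a :: (B ++ b :: C))) =
      ybFaceL R (A.length + B.length + 1) (ybFaceL R (A.length + 1) (A ++ a :: (B ++ b :: C))) := by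
  rw [ybFaceL_append_cons_append_cons,
    ybFaceL_append_cons R _ _ _ (by simp [length_ybPassL]), ybFaceL_append_cons R A a _ rfl,
    ybFaceL_append_append_cons R _ _ _ _ (by simp [length_ybPassL]),
    (ybPassL_ybPassL R hR A a _).1]

theorem ybFaceR_ybFaceL (hR : IsYangBaxter R) :
    ybFaceR R (A.length + 1) (ybFaceL R (A.length + B.length + 2) (A ++ a :: (B ++ b :: C))) =
      ybFaceL R (A.length + B.length + 1) (ybFaceR R (A.length + 1) (A ++ a :: (B ++ b :: C))) := by
  obtain ⟨hlist, hleft, hright⟩ := ybPassL_ybPassR R hR B a b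
  rw [ybFaceR_append_cons R A a _ rfl, ybPassR_append, ybPassR.eq_2,
    ybFaceL_append_append_cons R _ _ _ _ (by simp [length_ybPassR]), hlist, hleft, hright,
    ybFaceL_append_cons_append_cons, ybFaceR_append_cons R _ _ _ (by simp [length_ybPassL]),
    ybPassR_append]

end Faces

end

/-- The face maps of a set-theoretic Yang-Baxter operator satisfy the pre-cubical
relations `dᵢᵉ ∘ dⱼᵈ = dⱼ₋₁ᵈ ∘ dᵢᵉ` for `1 ≤ i < j ≤ n` and `ε, δ ∈ {l, r}`. -/
theorem yb_face_precubical {X : Type*} (R : X → X → X × X)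
    (Rl Rr : X × X × X → X × X × X)
    (hRl : ∀ x y z : X, Rl (x, y, z) = ((R x y).1, (R x y).2, z))
    (hRr : ∀ x y z : X, Rr (x, y, z) = (x, (R y z).1, (R y z).2))
    (hYB : Rl ∘ Rr ∘ Rl = Rr ∘ Rl ∘ Rr)
    (n i j : ℕ) (hi : 1 ≤ i) (hij : i < j) (hj : j ≤ n)
    (l : List X) (hl : l.length = n) (ε δ : Bool) :
    ybFace R ε i (ybFace R δ j l) = ybFace R δ (j - 1) (ybFace R ε i l) := by
  have hR := isYangBaxter_of_comp_eq R Rl Rr hRl hRr hYB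
  obtain ⟨A, a, B, b, C, rfl, hA, hB⟩ :=
    exists_eq_append_cons_append_cons (l := l) (i := i - 1) (j := j - 1) (by omega) (by omega)
  obtain rfl : i = A.length + 1 := by omega
  obtain rfl : j = A.length + B.length + 2 := by omega
  cases ε <;> cases δ
  · exact ybFaceR_ybFaceR R A B C a b hR
  · exact ybFaceR_ybFaceL R A B C a b hR
  · exact ybFaceL_ybFaceR R A B C a b
  · exact ybFaceL_ybFaceL R A B C a b hR
end

section
/- Let $X$ be a biquandle with operator $R$, and for $(x_1, \ldots, x_n) \in X^n$ with $R(x_j, x_{j+1}) = (x_j, x_{j+1})$ for some $j \leq n-1$, the terms $d_{j,n}^l$ and $d_{j+1,n}^l$ applied to $(x_1, \ldots, x_n)$ are equal: $d_{j+1,n}^l(x_1, \ldots, x_n) = d_{j,n}^l(x_1, \ldots, x_n)$. Similarly $d_{j+1,n}^r(x_1, \ldots, x_n) = d_{j,n}^r(x_1, \ldots, x_n)$. -/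
lemma ybPassL_append_singleton {X : Type*} (R : X → X → X × X) (u : List X) (a b : X) :
    ybPassL R (u ++ [a]) b =
      ((ybPassL R u (R a b).1).1 ++ [(R a b).2], (ybPassL R u (R a b).1).2) := by
  induction u with
  | nil => simp [ybPassL]
  | cons y t ih => simp [ybPassL, ih]

lemma ybFaceL_length_add_one {X : Type*} (R : X → X → X × X) (s t : List X) (m : X) :
    ybFaceL R (s.length + 1) (s ++ m :: t) = (ybPassL R s m).1 ++ t := by
  simp [ybFaceL]

lemma ybFaceR_length_add_one {X : Type*} (R : X → X → X × X) (s t : List X) (m : X) :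
    ybFaceR R (s.length + 1) (s ++ m :: t) = s ++ ybPassR R m t := by
  simp [ybFaceR]

/-- Here `j = s.length + 1`. -/
theorem yb_adjacent_faces_cancel_general {X : Type*} (R : X → X → X × X)
    (s t : List X) (a b : X) (hfix : R a b = (a, b)) :
    ybFaceL R (s.length + 2) (s ++ a :: b :: t) =
      ybFaceL R (s.length + 1) (s ++ a :: b :: t) ∧
    ybFaceR R (s.length + 2) (s ++ a :: b :: t) =
      ybFaceR R (s.length + 1) (s ++ a :: b :: t) := by
  have hsplit : s ++ a :: b :: t = (s ++ [a]) ++ b :: t := by simp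
  have hlen : s.length + 2 = (s ++ [a]).length + 1 := by simp
  rw [hlen, hsplit, ybFaceL_length_add_one, ybFaceR_length_add_one, ← hsplit,
    ybFaceL_length_add_one, ybFaceR_length_add_one, ybPassL_append_singleton, ybPassR, hfix]
  simp

/-- If the adjacent pair at positions `(j, j+1)` of a tuple is fixed by `R`
(where `j = s.length + 1`), then the faces at `j` and `j + 1` coincide, both for
the left face maps and for the right face maps; this is why these terms cancel
in the Yang-Baxter boundary map on degenerate chains. -/
theorem yb_adjacent_faces_cancel {X : Type*} (R : X → X → X × X)
    (Rl Rr : X × X × X → X × X × X)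
    (hRl : ∀ x y z : X, Rl (x, y, z) = ((R x y).1, (R x y).2, z))
    (hRr : ∀ x y z : X, Rr (x, y, z) = (x, (R y z).1, (R y z).2))
    (hYB : Rl ∘ Rr ∘ Rl = Rr ∘ Rl ∘ Rr)
    (s t : List X) (a b : X) (hfix : R a b = (a, b)) :
    ybFaceL R (s.length + 2) (s ++ a :: b :: t) =
      ybFaceL R (s.length + 1) (s ++ a :: b :: t) ∧
    ybFaceR R (s.length + 2) (s ++ a :: b :: t) =
      ybFaceR R (s.length + 1) (s ++ a :: b :: t) :=
  yb_adjacent_faces_cancel_general R s t a b hfix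
end

section
/- For the cyclic biquandle $C_n$ with $R(i,j) = (j+1, i-1)$ on $\mathbb{Z}_n$, the first set-theoretic Yang-Baxter homology group is $H_1^{YB}(C_n) \cong \mathbb{Z} \oplus \mathbb{Z}_n$. -/
/-!
Every relation `(i-1) - (i) - (j) + (j+1)` with `i = 1` says that the difference
`(k+1) - (k)` equals `d := (1) - (0)` for every `k`, so `(m) = (0) + m • d` for every integer `m`;
going once around the cycle gives `n • d = 0`. Hence the quotient is generated by `(0)` and `d`,
and the weight map `(k) ↦ (1, k)`, which kills all boundaries, sends these generators to the
basis `(1, 0)`, `(0, 1)` of `ℤ × ℤ/n`.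
-/

noncomputable section

namespace CyclicBiquandle

open Finsupp

section Relation

variable {A : Type*} [AddCommGroup A] {n : ℕ} {e : ZMod n → A}

theorem succ_sub_eq (he : ∀ i j : ZMod n, e (i - 1) - e i - e j + e (j + 1) = 0) (k : ZMod n) :
    e (k + 1) - e k = e 1 - e 0 := by
  have h := he 1 k
  rw [sub_self] at h
  rw [← sub_eq_zero, ← h]
  abel

theorem eq_intCast_zsmul (he : ∀ i j : ZMod n, e (i - 1) - e i - e j + e (j + 1) = 0) (m : ℤ) :
    e m = e 0 + m • (e 1 - e 0) := by
  induction m using Int.induction_on with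
  | zero => simp
  | succ m ih =>
    have h := succ_sub_eq he ((m : ℤ) : ZMod n)
    rw [Int.cast_add, Int.cast_one, sub_eq_iff_eq_add'.mp h, ih, add_smul, one_smul, add_assoc]
  | pred m ih =>
    have h := succ_sub_eq he ((-m - 1 : ℤ) : ZMod n)
    rw [Int.cast_sub, Int.cast_one, sub_add_cancel, ← Int.cast_one, ← Int.cast_sub, ih,
      Int.cast_one] at h
    rw [sub_smul, one_smul, ← add_sub_assoc]
    exact eq_sub_of_add_eq' (sub_eq_iff_eq_add.mp h).symm

theorem natCast_zsmul_eq_zero (he : ∀ i j : ZMod n, e (i - 1) - e i - e j + e (j + 1) = 0) :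
    (n : ℤ) • (e 1 - e 0) = 0 := by
  simpa [Int.cast_natCast] using eq_intCast_zsmul he n

end Relation

variable {n : ℕ}

def boundaries (n : ℕ) : AddSubgroup (ZMod n →₀ ℤ) :=
  AddSubgroup.closure {c : ZMod n →₀ ℤ | ∃ i j : ZMod n,
    c = single (i - 1) 1 - single i 1 - single j 1 + single (j + 1) 1}

def weight (n : ℕ) : (ZMod n →₀ ℤ) →+ ℤ × ZMod n :=
  liftAddHom fun k => zmultiplesHom _ (1, k)

@[simp]
theorem weight_single (k : ZMod n) : weight n (single k 1) = (1, k) := by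
  simp [weight]

theorem boundaries_le_ker_weight : boundaries n ≤ (weight n).ker := by
  rw [boundaries, AddSubgroup.closure_le]
  rintro c ⟨i, j, rfl⟩
  simp only [SetLike.mem_coe, AddMonoidHom.mem_ker, map_add, map_sub, weight_single,
    Prod.mk_sub_mk, Prod.mk_add_mk, Prod.mk_eq_zero]
  constructor <;> ring

abbrev FirstHomology (n : ℕ) := (ZMod n →₀ ℤ) ⧸ boundaries n

def gen (k : ZMod n) : FirstHomology n := QuotientAddGroup.mk (single k 1)

theorem gen_relation (i j : ZMod n) : gen (i - 1) - gen i - gen j + gen (j + 1) = 0 := by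
  simp only [gen, ← QuotientAddGroup.mk_sub, ← QuotientAddGroup.mk_add,
    QuotientAddGroup.eq_zero_iff]
  exact AddSubgroup.subset_closure ⟨i, j, rfl⟩

def weightHomology (n : ℕ) : FirstHomology n →+ ℤ × ZMod n :=
  QuotientAddGroup.lift _ (weight n) boundaries_le_ker_weight

@[simp]
theorem weightHomology_gen (k : ZMod n) : weightHomology n (gen k) = (1, k) :=
  weight_single k

def ofWeight (n : ℕ) : ℤ × ZMod n →+ FirstHomology n :=
  (zmultiplesHom _ (gen 0)).comp (AddMonoidHom.fst ℤ (ZMod n)) +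
    (ZMod.lift n ⟨zmultiplesHom _ (gen 1 - gen 0), natCast_zsmul_eq_zero gen_relation⟩).comp
      (AddMonoidHom.snd ℤ (ZMod n))

theorem ofWeight_intCast (a m : ℤ) :
    ofWeight n (a, m) = a • gen 0 + m • (gen 1 - gen 0) := by
  simp [ofWeight, ZMod.lift_coe]

theorem weightHomology_ofWeight (p : ℤ × ZMod n) : weightHomology n (ofWeight n p) = p := by
  obtain ⟨a, k⟩ := p
  rw [← ZMod.intCast_zmod_cast k, ofWeight_intCast]
  simp

theorem ofWeight_weightHomology (x : FirstHomology n) : ofWeight n (weightHomology n x) = x := by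
  suffices (ofWeight n).comp (weightHomology n) = AddMonoidHom.id _ from DFunLike.congr_fun this x
  refine QuotientAddGroup.addMonoidHom_ext _ (addHom_ext' fun k => AddMonoidHom.ext_int ?_)
  change ofWeight n (weightHomology n (gen k)) = gen k
  rw [weightHomology_gen, ← ZMod.intCast_zmod_cast k, ofWeight_intCast, one_smul,
    ← eq_intCast_zsmul gen_relation]

def firstHomologyEquiv (n : ℕ) : FirstHomology n ≃+ ℤ × ZMod n :=
  { weightHomology n with
    invFun := ofWeight n
    left_inv := ofWeight_weightHomology
    right_inv := weightHomology_ofWeight }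

end CyclicBiquandle

end

theorem cyclic_biquandle_first_homology_general (n : ℕ) :
    Nonempty (((ZMod n →₀ ℤ) ⧸ AddSubgroup.closure
        {c : ZMod n →₀ ℤ | ∃ i j : ZMod n,
          c = Finsupp.single (i - 1) 1 - Finsupp.single i 1
              - Finsupp.single j 1 + Finsupp.single (j + 1) 1})
      ≃+ ℤ × ZMod n) :=
  ⟨CyclicBiquandle.firstHomologyEquiv n⟩

/-- The first set-theoretic Yang-Baxter homology group of the cyclic biquandle
`Cₙ` (where `R(i,j) = (j+1, i-1)` on `ℤ/n`) is `ℤ ⊕ ℤₙ`.  Here `∂₁ = 0`, so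
`H₁ = ℤ[ℤₙ] / im ∂₂` with `∂₂(i,j) = (i-1) - (i) - (j) + (j+1)`. -/
theorem cyclic_biquandle_first_homology (n : ℕ) (hn : 1 ≤ n) :
    Nonempty (((ZMod n →₀ ℤ) ⧸ AddSubgroup.closure
        {c : ZMod n →₀ ℤ | ∃ i j : ZMod n,
          c = Finsupp.single (i - 1) 1 - Finsupp.single i 1
              - Finsupp.single j 1 + Finsupp.single (j + 1) 1})
      ≃+ ℤ × ZMod n) :=
  cyclic_biquandle_first_homology_general n
end

section
/- For the cyclic biquandle $C_n$ on $\mathbb{Z}_n$ with $R(i,j) = (j+1, i-1)$, the degenerate chain group $C_2^D(C_n)$ is the free abelian group on $\{(i, i-1) : i \in \mathbb{Z}_n\}$, and every such generator is a cycle of the Yang-Baxter chain complex; moreover the second degenerate homology $H_2^D(C_n) \cong \mathbb{Z}$. -/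
/-!
Every fixed pair of `R` is of the form `(i, i - 1)`, and `∂₂(i, i - 1) = 0`, so every degenerate
2-chain is a cycle and `C₂ᴰ` is free on the `eᵢ = (i, i - 1)`. Both kinds of degenerate triple,
`(y + 1, y, z)` and `(x, y, y - 1)`, have boundary `e_y - e_{y+1}`, so `∂₃(C₃ᴰ)` is spanned by the
consecutive differences. Since `ZMod n` is generated by `1`, these span exactly the degenerate
chains of coefficient sum zero, and the coefficient sum identifies `H₂ᴰ(Cₙ)` with `ℤ`.
-/

/-- The boundary map `∂₂ : C₂ → C₁` of the set-theoretic Yang-Baxter chain complex of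
the cyclic biquandle `Cₙ` (`R(i,j) = (j+1, i-1)`):
`∂₂(i,j) = (i-1) - (i) - (j) + (j+1)`. -/
noncomputable def cyclicBnd2 (n : ℕ) :
    (ZMod n × ZMod n →₀ ℤ) →+ (ZMod n →₀ ℤ) :=
  Finsupp.liftAddHom fun p => zmultiplesHom _
    (Finsupp.single (p.1 - 1) 1 - Finsupp.single p.1 1
      - Finsupp.single p.2 1 + Finsupp.single (p.2 + 1) 1)

/-- The boundary map `∂₃ : C₃ → C₂` of the set-theoretic Yang-Baxter chain complex of
the cyclic biquandle `Cₙ`, given (up to an overall sign) by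
`∂₃(x,y,z) = (y,z) - (y+1,z+1) - (x-1,z) + (x,z+1) + (x-1,y-1) - (x,y)`. -/
noncomputable def cyclicBnd3 (n : ℕ) :
    (ZMod n × ZMod n × ZMod n →₀ ℤ) →+ (ZMod n × ZMod n →₀ ℤ) :=
  Finsupp.liftAddHom fun t => zmultiplesHom _
    (Finsupp.single (t.2.1, t.2.2) 1 - Finsupp.single (t.2.1 + 1, t.2.2 + 1) 1
      - Finsupp.single (t.1 - 1, t.2.2) 1 + Finsupp.single (t.1, t.2.2 + 1) 1
      + Finsupp.single (t.1 - 1, t.2.1 - 1) 1 - Finsupp.single (t.1, t.2.1) 1)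

/-- The degenerate 2-chains of `Cₙ`: spanned by the pairs fixed by `R`. -/
noncomputable def cyclicDeg2 (n : ℕ) : AddSubgroup (ZMod n × ZMod n →₀ ℤ) :=
  AddSubgroup.closure {c | ∃ p : ZMod n × ZMod n,
    (p.2 + 1, p.1 - 1) = p ∧ c = Finsupp.single p 1}

/-- The degenerate 3-chains of `Cₙ`: spanned by triples with an adjacent fixed pair. -/
noncomputable def cyclicDeg3 (n : ℕ) : AddSubgroup (ZMod n × ZMod n × ZMod n →₀ ℤ) :=
  AddSubgroup.closure {c | ∃ t : ZMod n × ZMod n × ZMod n,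
    ((t.2.1 + 1, t.1 - 1) = (t.1, t.2.1) ∨ (t.2.2 + 1, t.2.1 - 1) = (t.2.1, t.2.2)) ∧
    c = Finsupp.single t 1}

noncomputable def AddSubgroup.quotientAddSubgroupOfEquivOfKer {G A : Type*} [AddCommGroup G]
    [AddGroup A] {H N : AddSubgroup G} (f : G →+ A) (hker : f.ker ⊓ H = N ⊓ H)
    (hsurj : ∀ a, ∃ x ∈ H, f x = a) : H ⧸ N.addSubgroupOf H ≃+ A :=
  (QuotientAddGroup.quotientAddEquivOfEq (AddSubgroup.addSubgroupOf_inj.mpr hker.symm)).trans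
    (QuotientAddGroup.quotientKerEquivOfSurjective (f.domRestrict H) fun a =>
      let ⟨x, hx, hfx⟩ := hsurj a; ⟨⟨x, hx⟩, hfx⟩)

namespace CyclicBiquandle

variable {n : ℕ}

noncomputable def degGen (i : ZMod n) : ZMod n × ZMod n →₀ ℤ :=
  Finsupp.single (i, i - 1) 1

theorem isFixed_iff (p : ZMod n × ZMod n) : (p.2 + 1, p.1 - 1) = p ↔ p.2 = p.1 - 1 := by
  obtain ⟨i, j⟩ := p
  simp only [Prod.mk.injEq]
  constructor
  · exact fun h => h.2.symm
  · rintro rfl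
    exact ⟨sub_add_cancel i 1, rfl⟩

theorem cyclicDeg2_eq_closure (n : ℕ) :
    cyclicDeg2 n = AddSubgroup.closure (Set.range (degGen (n := n))) := by
  rw [cyclicDeg2]
  congr 1
  ext c
  simp only [isFixed_iff, Set.mem_range, Prod.exists]
  constructor
  · rintro ⟨i, _, rfl, rfl⟩
    exact ⟨i, rfl⟩
  · rintro ⟨i, rfl⟩
    exact ⟨i, _, rfl, rfl⟩

theorem degGen_mem_cyclicDeg2 (i : ZMod n) : degGen i ∈ cyclicDeg2 n := by
  rw [cyclicDeg2_eq_closure]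
  exact AddSubgroup.subset_closure ⟨i, rfl⟩

theorem cyclicBnd2_degGen (i : ZMod n) : cyclicBnd2 n (degGen i) = 0 := by
  simp only [cyclicBnd2, degGen, Finsupp.liftAddHom_apply_single, zmultiplesHom_apply, one_smul,
    sub_add_cancel]
  abel

theorem cyclicDeg2_le_ker (n : ℕ) : cyclicDeg2 n ≤ (cyclicBnd2 n).ker := by
  rw [cyclicDeg2_eq_closure, AddSubgroup.closure_le]
  rintro _ ⟨i, rfl⟩
  exact cyclicBnd2_degGen i

noncomputable def consecutiveDiffs (n : ℕ) : AddSubgroup (ZMod n × ZMod n →₀ ℤ) :=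
  AddSubgroup.closure (Set.range fun i : ZMod n => degGen i - degGen (i + 1))

theorem degGen_sub_degGen_succ_mem (i : ZMod n) :
    degGen i - degGen (i + 1) ∈ consecutiveDiffs n :=
  AddSubgroup.subset_closure ⟨i, rfl⟩

theorem consecutiveDiffs_le_cyclicDeg2 (n : ℕ) : consecutiveDiffs n ≤ cyclicDeg2 n := by
  rw [consecutiveDiffs, AddSubgroup.closure_le]
  rintro _ ⟨i, rfl⟩
  exact sub_mem (degGen_mem_cyclicDeg2 i) (degGen_mem_cyclicDeg2 (i + 1))

theorem cyclicBnd3_single_fst_fixed (y z : ZMod n) :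
    cyclicBnd3 n (Finsupp.single (y + 1, y, z) 1) = degGen y - degGen (y + 1) := by
  simp only [cyclicBnd3, degGen, Finsupp.liftAddHom_apply_single, zmultiplesHom_apply, one_smul,
    add_sub_cancel_right]
  abel

theorem cyclicBnd3_single_snd_fixed (x y : ZMod n) :
    cyclicBnd3 n (Finsupp.single (x, y, y - 1) 1) = degGen y - degGen (y + 1) := by
  simp only [cyclicBnd3, degGen, Finsupp.liftAddHom_apply_single, zmultiplesHom_apply, one_smul,
    sub_add_cancel, add_sub_cancel_right]
  abel

theorem map_cyclicDeg3 (n : ℕ) : (cyclicDeg3 n).map (cyclicBnd3 n) = consecutiveDiffs n := by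
  rw [cyclicDeg3, AddMonoidHom.map_closure]
  apply le_antisymm
  · rw [AddSubgroup.closure_le]
    rintro _ ⟨_, ⟨⟨x, y, z⟩, hfix | hfix, rfl⟩, rfl⟩ <;> simp only [Prod.mk.injEq] at hfix
    · obtain ⟨rfl, -⟩ := hfix
      exact cyclicBnd3_single_fst_fixed y z ▸ degGen_sub_degGen_succ_mem y
    · obtain ⟨-, rfl⟩ := hfix
      exact cyclicBnd3_single_snd_fixed x y ▸ degGen_sub_degGen_succ_mem y
  · rw [consecutiveDiffs, AddSubgroup.closure_le]
    rintro _ ⟨i, rfl⟩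
    exact AddSubgroup.subset_closure
      ⟨_, ⟨(i + 1, i, 0), Or.inl (by simp), rfl⟩, cyclicBnd3_single_fst_fixed i 0⟩

theorem consecutiveDiffs_le_ker_degree (n : ℕ) :
    consecutiveDiffs n ≤ (Finsupp.degree : (ZMod n × ZMod n →₀ ℤ) →+ ℤ).ker := by
  rw [consecutiveDiffs, AddSubgroup.closure_le]
  rintro _ ⟨i, rfl⟩
  simp [degGen]

theorem degGen_sub_degGen_zero_mem (i : ZMod n) : degGen i - degGen 0 ∈ consecutiveDiffs n := by
  obtain ⟨k, rfl⟩ := ZMod.intCast_surjective i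
  induction k using Int.induction_on with
  | zero => simp
  | succ k ih =>
    push_cast
    simpa using sub_mem ih (degGen_sub_degGen_succ_mem (k : ZMod n))
  | pred k ih =>
    have hstep := degGen_sub_degGen_succ_mem ((-k - 1 : ℤ) : ZMod n)
    push_cast at hstep ⊢
    simpa using add_mem hstep ih

theorem sub_degree_smul_degGen_zero_mem {c : ZMod n × ZMod n →₀ ℤ} (hc : c ∈ cyclicDeg2 n) :
    c - c.degree • degGen 0 ∈ consecutiveDiffs n := by
  let f : (ZMod n × ZMod n →₀ ℤ) →+ (ZMod n × ZMod n →₀ ℤ) :=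
    AddMonoidHom.id _ - (zmultiplesHom _ (degGen 0)).comp Finsupp.degree
  suffices cyclicDeg2 n ≤ (consecutiveDiffs n).comap f from this hc
  rw [cyclicDeg2_eq_closure, AddSubgroup.closure_le]
  rintro _ ⟨i, rfl⟩
  simpa [f, degGen] using degGen_sub_degGen_zero_mem i

theorem ker_degree_inf_cyclicDeg2 (n : ℕ) :
    (Finsupp.degree : (ZMod n × ZMod n →₀ ℤ) →+ ℤ).ker ⊓ cyclicDeg2 n = consecutiveDiffs n := by
  refine le_antisymm ?_
    (le_inf (consecutiveDiffs_le_ker_degree n) (consecutiveDiffs_le_cyclicDeg2 n))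
  rintro c ⟨hdeg, hc⟩
  simpa [AddMonoidHom.mem_ker.mp hdeg] using sub_degree_smul_degGen_zero_mem hc

end CyclicBiquandle

theorem cyclic_biquandle_degenerate_homology_general (n : ℕ) :
    (∀ p : ZMod n × ZMod n, (p.2 + 1, p.1 - 1) = p ↔ p.2 = p.1 - 1) ∧
    (cyclicDeg2 n = AddSubgroup.closure
      {c | ∃ i : ZMod n, c = Finsupp.single (i, i - 1) (1 : ℤ)}) ∧
    (∀ i : ZMod n, cyclicBnd2 n (Finsupp.single (i, i - 1) 1) = 0) ∧
    Nonempty ((↥(cyclicDeg2 n ⊓ (cyclicBnd2 n).ker) ⧸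
        (((cyclicDeg3 n).map (cyclicBnd3 n)).addSubgroupOf
          (cyclicDeg2 n ⊓ (cyclicBnd2 n).ker)))
      ≃+ ℤ) := by
  open CyclicBiquandle in
  refine ⟨isFixed_iff, by simpa [Set.range, eq_comm, degGen] using cyclicDeg2_eq_closure n,
    cyclicBnd2_degGen, ⟨AddSubgroup.quotientAddSubgroupOfEquivOfKer Finsupp.degree ?_
      fun m => ⟨m • degGen 0, ?_, by simp [degGen]⟩⟩⟩
  · rw [inf_of_le_left (cyclicDeg2_le_ker n), map_cyclicDeg3, ker_degree_inf_cyclicDeg2,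
      inf_of_le_left (consecutiveDiffs_le_cyclicDeg2 n)]
  · exact zsmul_mem (AddSubgroup.mem_inf.mpr ⟨degGen_mem_cyclicDeg2 0, cyclicBnd2_degGen 0⟩) m

/-- For the cyclic biquandle `Cₙ`: the degenerate pairs are exactly the `(i, i-1)`, so
`C₂ᴰ(Cₙ)` is the free abelian group on `{(i, i-1)}`; each such generator is a cycle;
and the second degenerate homology `H₂ᴰ(Cₙ) = ker(∂₂|_{C₂ᴰ}) / ∂₃(C₃ᴰ)` is `ℤ`. -/
theorem cyclic_biquandle_degenerate_homology (n : ℕ) (hn : 1 ≤ n) :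
    (∀ p : ZMod n × ZMod n, (p.2 + 1, p.1 - 1) = p ↔ p.2 = p.1 - 1) ∧
    (cyclicDeg2 n = AddSubgroup.closure
      {c | ∃ i : ZMod n, c = Finsupp.single (i, i - 1) (1 : ℤ)}) ∧
    (∀ i : ZMod n, cyclicBnd2 n (Finsupp.single (i, i - 1) 1) = 0) ∧
    Nonempty ((↥(cyclicDeg2 n ⊓ (cyclicBnd2 n).ker) ⧸
        (((cyclicDeg3 n).map (cyclicBnd3 n)).addSubgroupOf
          (cyclicDeg2 n ⊓ (cyclicBnd2 n).ker)))
      ≃+ ℤ) :=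
  cyclic_biquandle_degenerate_homology_general n
end
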